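/- arXiv:1303.6023 — 4 statements merged into one kernel-verified Lean document; each statement's English description precedes it below -/
import Mathlib

section
/- Let ρ be a continuous representation of SL(2,ℝ) on a finite-dimensional real normed vector space V, and let u = [[1,t],[0,1]] with t ≠ 0. Then there exists a constant κ > 0 (depending on t) such that for every v ∈ V, max{‖v⁺‖, ‖(uv)⁺ + (uv)⁰‖} ≥ κ‖v‖. -/
open Filter Topology

/-- `SL(2,ℝ)`. -/
abbrev SL2R := Matrix.SpecialLinearGroup (Fin 2) ℝ

/-- The element `a = diag(α, α⁻¹)` of `SL(2,ℝ)`, for `α > 1`. -/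
noncomputable def diagSL (α : ℝ) (hα : 1 < α) : SL2R :=
  ⟨!![α, 0; 0, α⁻¹], by
    have h0 : α ≠ 0 := by linarith
    simp [Matrix.det_fin_two_of, mul_inv_cancel₀ h0]⟩

/-- The unipotent element `u_r = [[1,r],[0,1]]` of `SL(2,ℝ)`. -/
def uSL (r : ℝ) : SL2R :=
  ⟨!![1, r; 0, 1], by simp [Matrix.det_fin_two_of]⟩

/-- Topology on `SL(2,ℝ)`, induced from the matrix entries. -/
noncomputable instance : TopologicalSpace SL2R :=
  TopologicalSpace.induced (fun g => (g : Matrix (Fin 2) (Fin 2) ℝ)) inferInstance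

section Spaces

variable {V : Type*} [NormedAddCommGroup V] [NormedSpace ℝ V]

/-- `V⁺ = {v : a^{−k} v → 0}` (with respect to `ρ` and `a`). -/
def Vplus (ρ : SL2R →* (V →ₗ[ℝ] V)) (a : SL2R) : Set V :=
  {v | Tendsto (fun k : ℕ => ((ρ a⁻¹) ^ k) v) atTop (𝓝 0)}

/-- `V⁰ = {v : a v = v}` (with respect to `ρ` and `a`). -/
def Vzero (ρ : SL2R →* (V →ₗ[ℝ] V)) (a : SL2R) : Set V :=
  {v | ρ a v = v}

/-- `V⁻ = {v : a^k v → 0}` (with respect to `ρ` and `a`). -/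
def Vminus (ρ : SL2R →* (V →ₗ[ℝ] V)) (a : SL2R) : Set V :=
  {v | Tendsto (fun k : ℕ => ((ρ a) ^ k) v) atTop (𝓝 0)}

end Spaces

/-! Since `v ↦ (v⁺, (uv)⁺ + (uv)⁰)` is linear on a finite-dimensional space, it suffices to show it
is injective: if `v ∈ V⁰ ⊕ V⁻` and `uv ∈ V⁻`, then `v = 0`. The identity
`w l_{1/t} = l_{-t} d_{1/t} u_t` (with `l` lower unipotent, `d` diagonal, `w` the Weyl element) and the
invariance of `V⁻` under the lower triangular group give `v₁ := l_{1/t} v ∈ w⁻¹ V⁻ = V⁺`. Since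
`a^k l_c a^{-k} = l_{c α^{-2k}} → 1`, the sequence `a^k v₁` has the same limit `v⁰` as `a^k v`; the
subspace `V⁺` is closed and `a`-invariant, so `v⁰ ∈ V⁺ ∩ V⁰ = 0`. Then `v₁ ∈ V⁺ ∩ V⁻ = 0`, so `v = 0`.
-/

def lSL (r : ℝ) : SL2R :=
  ⟨!![1, 0; r, 1], by simp [Matrix.det_fin_two_of]⟩

noncomputable def dSL (μ : ℝ) (hμ : μ ≠ 0) : SL2R :=
  ⟨!![μ, 0; 0, μ⁻¹], by simp [Matrix.det_fin_two_of, mul_inv_cancel₀ hμ]⟩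

def wSL : SL2R :=
  ⟨!![0, 1; -1, 0], by simp [Matrix.det_fin_two_of]⟩

lemma lSL_zero : lSL 0 = 1 :=
  Subtype.ext Matrix.one_fin_two.symm

lemma continuous_lSL : Continuous lSL :=
  continuous_induced_rng.mpr <| continuous_matrix fun i j => by
    fin_cases i <;> fin_cases j <;> simp [lSL] <;> fun_prop

lemma wSL_mul_lSL_inv {t : ℝ} (ht : t ≠ 0) :
    wSL * lSL t⁻¹ = lSL (-t) * dSL t⁻¹ (inv_ne_zero ht) * uSL t := by
  refine Subtype.ext ?_
  simp only [Matrix.SpecialLinearGroup.coe_mul]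
  simp [wSL, lSL, dSL, uSL, ht]

lemma commute_dSL_diagSL {μ : ℝ} (hμ : μ ≠ 0) {α : ℝ} (hα : 1 < α) :
    Commute (dSL μ hμ) (diagSL α hα) := by
  refine Subtype.ext ?_
  simp only [Matrix.SpecialLinearGroup.coe_mul]
  simp [dSL, diagSL, mul_comm]

lemma diagSL_mul_lSL {α : ℝ} (hα : 1 < α) (c : ℝ) :
    diagSL α hα * lSL c = lSL (c * (α ^ 2)⁻¹) * diagSL α hα := by
  have : α ≠ 0 := by positivity
  refine Subtype.ext ?_
  simp only [Matrix.SpecialLinearGroup.coe_mul]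
  simp [lSL, diagSL]
  field_simp

lemma diagSL_pow_mul_lSL {α : ℝ} (hα : 1 < α) (k : ℕ) (c : ℝ) :
    diagSL α hα ^ k * lSL c = lSL (c * (α ^ 2)⁻¹ ^ k) * diagSL α hα ^ k := by
  induction k generalizing c with
  | zero => simp
  | succ k ih =>
    rw [pow_succ, mul_assoc, diagSL_mul_lSL, ← mul_assoc, ih, pow_succ' _ k, mul_assoc c,
      mul_assoc]

lemma semiconjBy_wSL_inv_diagSL {α : ℝ} (hα : 1 < α) :
    SemiconjBy wSL⁻¹ (diagSL α hα) (diagSL α hα)⁻¹ := by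
  have : α ≠ 0 := by positivity
  have h : diagSL α hα * wSL * diagSL α hα = wSL := by
    refine Subtype.ext ?_
    simp only [Matrix.SpecialLinearGroup.coe_mul]
    simp [wSL, diagSL, this]
  calc wSL⁻¹ * diagSL α hα = (diagSL α hα * wSL * diagSL α hα)⁻¹ * diagSL α hα := by rw [h]
    _ = (diagSL α hα)⁻¹ * wSL⁻¹ := by group

section Representation

variable {V : Type*} [NormedAddCommGroup V] [NormedSpace ℝ V]

lemma continuous_apply_of_continuous_orbits [FiniteDimensional ℝ V] {G : Type*}
    [TopologicalSpace G] {ρ : G → V →ₗ[ℝ] V} (hρ : ∀ v, Continuous fun g => ρ g v) :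
    Continuous fun p : G × V => ρ p.1 p.2 := by
  have hclm : Continuous fun g => LinearMap.toContinuousLinearMap (ρ g) :=
    continuous_clm_apply.mpr hρ
  exact (hclm.comp continuous_fst).clm_apply continuous_snd

lemma tendsto_pow_apply_of_semiconjBy [FiniteDimensional ℝ V] {G : Type*} [Monoid G]
    (ρ : G →* (V →ₗ[ℝ] V)) {g b c : G} (h : SemiconjBy g c b) {x : V}
    (hx : Tendsto (fun k : ℕ => (ρ c ^ k) x) atTop (𝓝 0)) :
    Tendsto (fun k : ℕ => (ρ b ^ k) (ρ g x)) atTop (𝓝 0) := by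
  have hcomm : ∀ k : ℕ, (ρ b ^ k) (ρ g x) = ρ g ((ρ c ^ k) x) := fun k => by
    rw [← map_pow, ← map_pow, ← Module.End.mul_apply, ← map_mul, ← (h.pow_right k).eq, map_mul,
      Module.End.mul_apply]
  simpa only [hcomm, map_zero, Function.comp_def] using
    ((ρ g).continuous_of_finiteDimensional.tendsto 0).comp hx

variable (ρ : SL2R →* (V →ₗ[ℝ] V))

def VplusSubmodule (a : SL2R) : Submodule ℝ V where
  carrier := Vplus ρ a
  zero_mem' := by simp [Vplus]
  add_mem' hx hy := by simpa [Vplus] using hx.add hy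
  smul_mem' c x hx := by simpa [Vplus] using hx.const_smul c

@[simp] lemma zero_mem_Vplus (a : SL2R) : (0 : V) ∈ Vplus ρ a := (VplusSubmodule ρ a).zero_mem

@[simp] lemma zero_mem_Vzero (a : SL2R) : (0 : V) ∈ Vzero ρ a := map_zero _

@[simp] lemma zero_mem_Vminus (a : SL2R) : (0 : V) ∈ Vminus ρ a := by
  simp [Vminus]

lemma pow_apply_of_mem_Vzero {a : SL2R} {z : V} (hz : z ∈ Vzero ρ a) (k : ℕ) :
    (ρ a ^ k) z = z := by
  rw [Module.End.pow_apply, Function.iterate_fixed hz]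

lemma eq_zero_of_mem_Vplus_of_mem_Vzero {a : SL2R} {x : V} (hp : x ∈ Vplus ρ a)
    (hz : x ∈ Vzero ρ a) : x = 0 := by
  have hinv : x ∈ Vzero ρ a⁻¹ := by
    change ρ a⁻¹ x = x
    conv_lhs => rw [← hz]
    rw [← Module.End.mul_apply, ← map_mul, inv_mul_cancel, map_one, Module.End.one_apply]
  have h : Tendsto (fun k : ℕ => (ρ a⁻¹ ^ k) x) atTop (𝓝 0) := hp
  simp only [pow_apply_of_mem_Vzero ρ hinv] at h
  exact tendsto_nhds_unique tendsto_const_nhds h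

lemma tendsto_pow_apply_add_of_mem_Vzero {a : SL2R} {z m : V} (hz : z ∈ Vzero ρ a)
    (hm : m ∈ Vminus ρ a) : Tendsto (fun k : ℕ => (ρ a ^ k) (z + m)) atTop (𝓝 z) := by
  simpa [pow_apply_of_mem_Vzero ρ hz] using (tendsto_const_nhds (x := z)).add hm

variable [FiniteDimensional ℝ V]

lemma isClosed_Vplus (a : SL2R) : IsClosed (Vplus ρ a) :=
  (VplusSubmodule ρ a).closed_of_finiteDimensional

lemma mem_Vminus_of_commute {g a : SL2R} (h : Commute g a) {x : V} (hx : x ∈ Vminus ρ a) :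
    ρ g x ∈ Vminus ρ a :=
  tendsto_pow_apply_of_semiconjBy ρ h hx

lemma mem_Vplus_of_commute {g a : SL2R} (h : Commute g a) {x : V} (hx : x ∈ Vplus ρ a) :
    ρ g x ∈ Vplus ρ a :=
  tendsto_pow_apply_of_semiconjBy ρ h.inv_right hx

lemma mem_Vplus_of_semiconjBy {g a : SL2R} (h : SemiconjBy g a a⁻¹) {x : V}
    (hx : x ∈ Vminus ρ a) : ρ g x ∈ Vplus ρ a :=
  tendsto_pow_apply_of_semiconjBy ρ h hx

variable {α : ℝ} (hα : 1 < α)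

lemma tendsto_pow_diagSL_apply_lSL (hρ : ∀ v, Continuous fun g => ρ g v) (c : ℝ) {x y : V}
    (hx : Tendsto (fun k : ℕ => (ρ (diagSL α hα) ^ k) x) atTop (𝓝 y)) :
    Tendsto (fun k : ℕ => (ρ (diagSL α hα) ^ k) (ρ (lSL c) x)) atTop (𝓝 y) := by
  have hshift : ∀ k : ℕ, (ρ (diagSL α hα) ^ k) (ρ (lSL c) x)
      = ρ (lSL (c * (α ^ 2)⁻¹ ^ k)) ((ρ (diagSL α hα) ^ k) x) := fun k => by
    rw [← map_pow, ← Module.End.mul_apply, ← map_mul, diagSL_pow_mul_lSL, map_mul, map_pow,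
      Module.End.mul_apply]
  have hβ : Tendsto (fun k : ℕ => c * (α ^ 2)⁻¹ ^ k) atTop (𝓝 0) := by
    simpa using (tendsto_pow_atTop_nhds_zero_of_lt_one (by positivity)
      (inv_lt_one_of_one_lt₀ (one_lt_pow₀ hα two_ne_zero))).const_mul c
  have hl : Tendsto (fun k : ℕ => lSL (c * (α ^ 2)⁻¹ ^ k)) atTop (𝓝 1) :=
    lSL_zero ▸ (continuous_lSL.tendsto 0).comp hβ
  simpa only [hshift, map_one, Module.End.one_apply, Function.comp_def] using
    ((continuous_apply_of_continuous_orbits hρ).tendsto (1, y)).comp (hl.prodMk_nhds hx)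

lemma mem_Vminus_lSL (hρ : ∀ v, Continuous fun g => ρ g v) (c : ℝ) {x : V}
    (hx : x ∈ Vminus ρ (diagSL α hα)) : ρ (lSL c) x ∈ Vminus ρ (diagSL α hα) :=
  tendsto_pow_diagSL_apply_lSL ρ hα hρ c hx

end Representation

lemma exists_pos_mul_norm_le_max {E F G : Type*} [NormedAddCommGroup E] [NormedSpace ℝ E]
    [FiniteDimensional ℝ E] [NormedAddCommGroup F] [NormedSpace ℝ F] [NormedAddCommGroup G]
    [NormedSpace ℝ G] (f : E →ₗ[ℝ] F) (g : E →ₗ[ℝ] G)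
    (h : ∀ v, f v = 0 → g v = 0 → v = 0) :
    ∃ κ : ℝ, 0 < κ ∧ ∀ v, κ * ‖v‖ ≤ max ‖f v‖ ‖g v‖ := by
  have hinj : Function.Injective (f.prod g) := by
    rw [← LinearMap.ker_eq_bot, LinearMap.ker_eq_bot']
    intro v hv
    exact h v (congrArg Prod.fst hv) (congrArg Prod.snd hv)
  obtain ⟨K, -, hK⟩ := (f.prod g).injective_iff_antilipschitz.mp hinj
  exact antilipschitzWith_iff_exists_mul_le_norm.mp ⟨K, hK⟩

theorem add_eq_zero_of_uSL_apply_mem_Vminus {V : Type*} [NormedAddCommGroup V]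
    [NormedSpace ℝ V] [FiniteDimensional ℝ V] (ρ : SL2R →* (V →ₗ[ℝ] V))
    (hρ : ∀ v, Continuous fun g => ρ g v) {α : ℝ} (hα : 1 < α)
    (hdisj : ∀ x ∈ Vplus ρ (diagSL α hα), x ∈ Vminus ρ (diagSL α hα) → x = 0)
    {t : ℝ} (ht : t ≠ 0) {z m : V} (hz : z ∈ Vzero ρ (diagSL α hα))
    (hm : m ∈ Vminus ρ (diagSL α hα)) (hu : ρ (uSL t) (z + m) ∈ Vminus ρ (diagSL α hα)) :
    z + m = 0 := by
  set a := diagSL α hα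
  set v₁ := ρ (lSL t⁻¹) (z + m)
  have hv₁ : v₁ ∈ Vplus ρ a := by
    have hw : ρ wSL v₁ ∈ Vminus ρ a := by
      rw [← Module.End.mul_apply, ← map_mul, wSL_mul_lSL_inv ht, map_mul, map_mul,
        Module.End.mul_apply, Module.End.mul_apply]
      exact mem_Vminus_lSL ρ hα hρ _ (mem_Vminus_of_commute ρ (commute_dSL_diagSL _ hα) hu)
    simpa [← Module.End.mul_apply, ← map_mul] using
      mem_Vplus_of_semiconjBy ρ (semiconjBy_wSL_inv_diagSL hα) hw
  have hlim : Tendsto (fun k : ℕ => (ρ a ^ k) v₁) atTop (𝓝 z) :=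
    tendsto_pow_diagSL_apply_lSL ρ hα hρ _ (tendsto_pow_apply_add_of_mem_Vzero ρ hz hm)
  have hz₀ : z = 0 := by
    refine eq_zero_of_mem_Vplus_of_mem_Vzero ρ ?_ hz
    exact (isClosed_Vplus ρ a).mem_of_tendsto hlim (Eventually.of_forall fun k => by
      simpa only [map_pow] using mem_Vplus_of_commute ρ ((Commute.refl a).pow_left k) hv₁)
  have hv₁₀ : v₁ = 0 := hdisj v₁ hv₁ (by rwa [hz₀] at hlim)
  calc z + m = ρ (lSL t⁻¹)⁻¹ v₁ := by
        rw [← Module.End.mul_apply, ← map_mul, inv_mul_cancel, map_one, Module.End.one_apply]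
    _ = 0 := by rw [hv₁₀, map_zero]

/-- for a continuous finite-dimensional representation `ρ` of `SL(2,ℝ)` and the
unipotent `u = [[1,t],[0,1]]` with `t ≠ 0`, there is `κ > 0` with
`max{‖v⁺‖, ‖(uv)⁺ + (uv)⁰‖} ≥ κ‖v‖` for all `v`.  The projections `q⁺, q⁰, q⁻` attached to
the decomposition `V = V⁺ ⊕ V⁰ ⊕ V⁻` (which holds for every such representation) are given
as data together with their characterizing properties. -/
theorem stmt4
    {V : Type*} [NormedAddCommGroup V] [NormedSpace ℝ V] [FiniteDimensional ℝ V]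
    (ρ : SL2R →* (V →ₗ[ℝ] V)) (hρ_cont : ∀ v : V, Continuous fun g => ρ g v)
    {α : ℝ} (hα : 1 < α)
    (qp q0 qm : V →ₗ[ℝ] V)
    (hdecomp : ∀ v : V, qp v ∈ Vplus ρ (diagSL α hα) ∧ q0 v ∈ Vzero ρ (diagSL α hα) ∧
      qm v ∈ Vminus ρ (diagSL α hα) ∧ qp v + q0 v + qm v = v)
    (huniq : ∀ v p z m : V, p ∈ Vplus ρ (diagSL α hα) → z ∈ Vzero ρ (diagSL α hα) →
      m ∈ Vminus ρ (diagSL α hα) → v = p + z + m → p = qp v ∧ z = q0 v ∧ m = qm v)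
    {t : ℝ} (ht : t ≠ 0) :
    ∃ κ : ℝ, 0 < κ ∧ ∀ v : V,
      κ * ‖v‖ ≤ max ‖qp v‖ ‖qp (ρ (uSL t) v) + q0 (ρ (uSL t) v)‖ := by
  have hdisj : ∀ x ∈ Vplus ρ (diagSL α hα), x ∈ Vminus ρ (diagSL α hα) → x = 0 :=
    fun x hp hm => (huniq x x 0 0 hp (by simp) (by simp) (by simp)).1.trans
      (huniq x 0 0 x (by simp) (by simp) hm (by simp)).1.symm
  refine exists_pos_mul_norm_le_max qp ((qp + q0) ∘ₗ ρ (uSL t)) fun v hp hpz => ?_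
  obtain ⟨-, hz, hm, hv⟩ := hdecomp v
  obtain ⟨-, -, hum, huv⟩ := hdecomp (ρ (uSL t) v)
  rw [hp, zero_add] at hv
  rw [LinearMap.comp_apply, LinearMap.add_apply] at hpz
  rw [hpz, zero_add] at huv
  have hu : ρ (uSL t) v ∈ Vminus ρ (diagSL α hα) := huv ▸ hum
  rw [← hv] at hu ⊢
  exact add_eq_zero_of_uSL_apply_mem_Vminus ρ hρ_cont hα hdisj ht hz hm hu
end

section
/- Let p be a positive integer, let r be a nonzero real number, and let c_p, c_{p+1}, …, c_{2p} be real numbers such that for every j ∈ {0, 1, …, p−1} one has Σ_{k=p}^{2p} C(k,j) r^{k−j} c_k = 0, where C(k,j) denotes the binomial coefficient. Then Σ_{k=p}^{2p} C(k,p) r^{k−p} c_k = (−1)^p c_p. -/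
/-!
Put `T j = ∑_{k=p}^{2p} C(k,j) r^(k-j) c_k`, the `j`-th Taylor coefficient at `r` of
`∑_{k=p}^{2p} c_k X^k`. For `p ≤ k ≤ 2p` the Chu–Vandermonde identity with the negative upper
index `-p-1` gives `∑_{j ≤ p} (-1)^(p-j) C(2p-j, p-j) C(k,j) = C(k-p-1, p) = (-1)^p δ_{k,p}`,
so the combination `∑_{j ≤ p} (-1)^(p-j) C(2p-j, p-j) r^j T j` equals `(-1)^p r^p c_p`.
When `T j = 0` for `j < p` only the term `r^p T p` survives, and `r ≠ 0` can be cancelled.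
-/

open Finset

lemma Ring.choose_neg_natCast_sub_one (n j : ℕ) :
    Ring.choose (-(n : ℤ) - 1) j = (-1) ^ j * ((n + j).choose j : ℤ) := by
  rw [show -(n : ℤ) - 1 = -((n : ℤ) + 1) by ring, Ring.choose_neg,
    show (n : ℤ) + 1 + j - 1 = ((n + j : ℕ) : ℤ) by push_cast; ring, Ring.choose_natCast,
    Units.smul_def, Int.coe_negOnePow_natCast, smul_eq_mul]

lemma sum_neg_one_pow_mul_choose_mul_choose_eq_ringChoose (p k : ℕ) :
    ∑ j ∈ range (p + 1), (-1 : ℤ) ^ (p - j) * ((2 * p - j).choose (p - j) : ℤ) * k.choose j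
      = Ring.choose ((k : ℤ) - p - 1) p := by
  rw [show (k : ℤ) - p - 1 = k + (-(p : ℤ) - 1) by ring, Ring.add_choose_eq p (Commute.all _ _),
    Nat.sum_antidiagonal_eq_sum_range_succ_mk]
  refine sum_congr rfl fun j hj => ?_
  have hjp : p + (p - j) = 2 * p - j := by grind
  rw [Ring.choose_natCast, Ring.choose_neg_natCast_sub_one, hjp]
  ring

lemma sum_neg_one_pow_mul_choose_mul_choose {p k : ℕ} (h1 : p ≤ k) (h2 : k ≤ 2 * p) :
    ∑ j ∈ range (p + 1), (-1 : ℤ) ^ (p - j) * ((2 * p - j).choose (p - j) : ℤ) * k.choose j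
      = if k = p then (-1) ^ p else 0 := by
  rw [sum_neg_one_pow_mul_choose_mul_choose_eq_ringChoose]
  split_ifs with hk
  · simpa [hk] using Ring.choose_neg_natCast_sub_one 0 p
  · rw [show (k : ℤ) - p - 1 = ((k - p - 1 : ℕ) : ℤ) by omega, Ring.choose_natCast,
      Nat.choose_eq_zero_of_lt (by omega), Nat.cast_zero]

section TaylorCoeff

variable {R : Type*} [CommRing R]

def taylorCoeff (p : ℕ) (r : R) (c : ℕ → R) (j : ℕ) : R :=
  ∑ k ∈ Icc p (2 * p), (k.choose j : R) * r ^ (k - j) * c k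

lemma sum_neg_one_pow_mul_choose_mul_pow_mul_taylorCoeff (p : ℕ) (r : R) (c : ℕ → R) :
    ∑ j ∈ range (p + 1), (-1) ^ (p - j) * ((2 * p - j).choose (p - j) : R) * r ^ j *
      taylorCoeff p r c j = (-1) ^ p * r ^ p * c p := by
  have inner : ∀ k ∈ Icc p (2 * p),
      ∑ j ∈ range (p + 1), (-1) ^ (p - j) * ((2 * p - j).choose (p - j) : R) * r ^ j *
        ((k.choose j : R) * r ^ (k - j) * c k)
      = ((if k = p then (-1) ^ p else 0 : ℤ) : R) * (r ^ k * c k) := by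
    intro k hk
    obtain ⟨hpk, hk2p⟩ := mem_Icc.mp hk
    rw [← sum_neg_one_pow_mul_choose_mul_choose hpk hk2p]
    push_cast
    rw [sum_mul]
    refine sum_congr rfl fun j hj => ?_
    have hjk : j ≤ k := (Nat.lt_succ_iff.mp (mem_range.mp hj)).trans hpk
    rw [← Nat.add_sub_cancel' hjk, pow_add, Nat.add_sub_cancel_left]
    ring
  simp only [taylorCoeff, mul_sum]
  rw [sum_comm, sum_congr rfl inner]
  simp [mul_assoc, show p ≤ 2 * p by omega]

end TaylorCoeff

theorem stmt8_general (p : ℕ) (r : ℝ) (hr : r ≠ 0) (c : ℕ → ℝ)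
    (hvanish : ∀ j : ℕ, j < p →
      ∑ k ∈ Finset.Icc p (2 * p), (Nat.choose k j : ℝ) * r ^ (k - j) * c k = 0) :
    ∑ k ∈ Finset.Icc p (2 * p), (Nat.choose k p : ℝ) * r ^ (k - p) * c k = (-1 : ℝ) ^ p * c p := by
  have hcomb := sum_neg_one_pow_mul_choose_mul_pow_mul_taylorCoeff p r c
  rw [sum_range_succ, sum_eq_zero fun j hj => by
    rw [taylorCoeff, hvanish j (mem_range.mp hj), mul_zero]] at hcomb
  simp only [zero_add, Nat.sub_self, pow_zero, Nat.choose_zero_right, Nat.cast_one, one_mul]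
    at hcomb
  rw [taylorCoeff] at hcomb
  exact mul_left_cancel₀ (pow_ne_zero p hr) (by linear_combination hcomb)

/-- if `Σ_{k=p}^{2p} C(k,j) r^{k−j} c_k = 0` for all `0 ≤ j ≤ p−1`, where
`r ≠ 0` and `p ≥ 1`, then `Σ_{k=p}^{2p} C(k,p) r^{k−p} c_k = (−1)^p c_p`. -/
theorem stmt8 (p : ℕ) (hp : 0 < p) (r : ℝ) (hr : r ≠ 0) (c : ℕ → ℝ)
    (hvanish : ∀ j : ℕ, j < p →
      ∑ k ∈ Finset.Icc p (2 * p), (Nat.choose k j : ℝ) * r ^ (k - j) * c k = 0) :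
    ∑ k ∈ Finset.Icc p (2 * p), (Nat.choose k p : ℝ) * r ^ (k - p) * c k = (-1 : ℝ) ^ p * c p :=
  stmt8_general p r hr c hvanish
end

section
/- Let p be a positive integer, let r be a nonzero real number, and let c_p, c_{p+1}, …, c_{2p} be real numbers such that c_p = 0 and for every j ∈ {0, 1, …, p−1} one has Σ_{k=p}^{2p} C(k,j) r^{k−j} c_k = 0, where C(k,j) denotes the binomial coefficient. Then c_k = 0 for every k ∈ {p, p+1, …, 2p}. -/
/-!
Encode the `c_k` as the polynomial `Q = ∑_{k=p}^{2p} c_k X^k`. The hypothesis on `j` says that the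
`j`-th Taylor coefficient of `Q` at `r` vanishes, so `(X - r)^p ∣ Q`; together with `c_p = 0`,
also `X^(p+1) ∣ Q`. These factors are coprime because `r ≠ 0`, so a polynomial of degree `2p + 1`
divides `Q`, whose degree is at most `2p`; hence `Q = 0`.
-/

open Finset Polynomial

namespace Polynomial

variable {R : Type*}

section CommRing

variable [CommRing R]

theorem X_sub_C_pow_dvd_iff_taylor_coeff_eq_zero {f : R[X]} {r : R} {n : ℕ} :
    (X - C r) ^ n ∣ f ↔ ∀ d < n, (taylor r f).coeff d = 0 := by
  rw [X_sub_C_pow_dvd_iff, ← taylor_apply, X_pow_dvd_iff]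

theorem coeff_sum_C_mul_X_pow (s : Finset ℕ) (c : ℕ → R) (m : ℕ) :
    (∑ k ∈ s, C (c k) * X ^ k).coeff m = if m ∈ s then c m else 0 := by
  simp only [finsetSum_coeff, coeff_C_mul_X_pow, Finset.sum_ite_eq]

theorem taylor_coeff_sum_C_mul_X_pow (s : Finset ℕ) (c : ℕ → R) (r : R) (j : ℕ) :
    (taylor r (∑ k ∈ s, C (c k) * X ^ k)).coeff j =
      ∑ k ∈ s, (k.choose j : R) * r ^ (k - j) * c k := by
  rw [taylor_coeff, map_sum, eval_finsetSum]
  refine Finset.sum_congr rfl fun k _ => ?_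
  rw [C_mul_X_pow_eq_monomial, hasseDeriv_monomial, eval_monomial]
  ring

end CommRing

theorem eq_zero_of_X_pow_dvd_of_X_sub_C_pow_dvd [CommRing R] [IsDomain R] {f : R[X]} {r : R}
    (hr : IsUnit r) {m n : ℕ} (hX : X ^ m ∣ f) (hXr : (X - C r) ^ n ∣ f)
    (hdeg : f.natDegree < m + n) : f = 0 := by
  have hcop : IsCoprime (X : R[X]) (X - C r) := by
    simpa using isCoprime_X_sub_C_of_isUnit_sub (a := 0) (b := r) (by simpa using hr.neg)
  refine eq_zero_of_dvd_of_natDegree_lt (hcop.pow.mul_dvd hX hXr) ?_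
  rwa [natDegree_mul (pow_ne_zero _ X_ne_zero) (pow_ne_zero _ (X_sub_C_ne_zero r)),
    natDegree_X_pow, natDegree_pow, natDegree_X_sub_C, mul_one]

end Polynomial

theorem stmt9_general (p : ℕ) (r : ℝ) (hr : r ≠ 0) (c : ℕ → ℝ) (hcp : c p = 0)
    (hvanish : ∀ j : ℕ, j < p →
      ∑ k ∈ Finset.Icc p (2 * p), (Nat.choose k j : ℝ) * r ^ (k - j) * c k = 0) :
    ∀ k ∈ Finset.Icc p (2 * p), c k = 0 := by
  set Q : ℝ[X] := ∑ k ∈ Icc p (2 * p), C (c k) * X ^ k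
  have hX : X ^ (p + 1) ∣ Q := X_pow_dvd_iff.2 fun d hd => by
    rw [coeff_sum_C_mul_X_pow]
    split_ifs with hmem
    · rw [show d = p by grind, hcp]
    · rfl
  have hXr : (X - C r) ^ p ∣ Q := X_sub_C_pow_dvd_iff_taylor_coeff_eq_zero.2 fun j hj => by
    rw [taylor_coeff_sum_C_mul_X_pow, hvanish j hj]
  have hdeg : Q.natDegree < (p + 1) + p :=
    (natDegree_sum_le_of_forall_le _ _ fun k hk =>
      (natDegree_C_mul_X_pow_le _ _).trans (Finset.mem_Icc.1 hk).2).trans_lt (by omega)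
  have hQ : Q = 0 := eq_zero_of_X_pow_dvd_of_X_sub_C_pow_dvd (Ne.isUnit hr) hX hXr hdeg
  intro k hk
  calc c k = Q.coeff k := by rw [coeff_sum_C_mul_X_pow, if_pos hk]
    _ = 0 := by rw [hQ, coeff_zero]

/-- if `c_p = 0` and `Σ_{k=p}^{2p} C(k,j) r^{k−j} c_k = 0` for all `0 ≤ j ≤ p−1`,
where `r ≠ 0` and `p ≥ 1`, then `c_k = 0` for all `p ≤ k ≤ 2p`. -/
theorem stmt9 (p : ℕ) (hp : 0 < p) (r : ℝ) (hr : r ≠ 0) (c : ℕ → ℝ) (hcp : c p = 0)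
    (hvanish : ∀ j : ℕ, j < p →
      ∑ k ∈ Finset.Icc p (2 * p), (Nat.choose k j : ℝ) * r ^ (k - j) * c k = 0) :
    ∀ k ∈ Finset.Icc p (2 * p), c k = 0 :=
  stmt9_general p r hr c hcp hvanish
end

section
/- Let I ⊆ ℝ be an interval, let φ: I → ℝ^m be differentiable with φ(s) ≠ 0 for all s ∈ I, and let v ∈ ℝ^m be a nonzero vector such that ⟨φ'(s), v⟩ = 2 ⟨φ(s), v⟩ ⟨φ(s), φ'(s)⟩ / ‖φ(s)‖² for all s ∈ I. Then there exists a real constant C such that ⟨φ(s), v⟩ = C ‖φ(s)‖² for all s ∈ I; consequently, if C = 0 then φ(I) is contained in the hyperplane {x ∈ ℝ^m : ⟨x, v⟩ = 0}, and if C ≠ 0 then φ(I) is contained in the sphere of center v/(2C) and radius ‖v‖/(2|C|). -/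
/-!
Along `φ`, the quotient `⟪φ s, v⟫ / ‖φ s‖²` has derivative
`(⟪φ', v⟫ ‖φ‖² - 2 ⟪φ, v⟫ ⟪φ, φ'⟫) / ‖φ‖⁴`, which the differential equation makes vanish;
on an interval it is therefore a constant `C`. For `C ≠ 0`, completing the square in
`⟪x, v⟫ = C ‖x‖²` gives `‖x - v / (2C)‖² = ‖v‖² / (4C²)`.
-/

open scoped RealInnerProductSpace

theorem Convex.eq_of_hasDerivWithinAt_zero {E : Type*} [NormedAddCommGroup E] [NormedSpace ℝ E]
    {f : ℝ → E} {s : Set ℝ} (hs : Convex ℝ s) (hf : ∀ x ∈ s, HasDerivWithinAt f 0 s x)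
    {x y : ℝ} (hx : x ∈ s) (hy : y ∈ s) : f x = f y := by
  have h := hs.norm_image_sub_le_of_norm_hasDerivWithin_le hf (fun _ _ => norm_zero.le) hx hy
  rw [zero_mul, norm_le_zero_iff, sub_eq_zero] at h
  exact h.symm

variable {E : Type*} [NormedAddCommGroup E] [InnerProductSpace ℝ E]

theorem HasDerivWithinAt.inner_div_norm_sq {φ : ℝ → E} {φ' : E} {s : Set ℝ} {t : ℝ}
    (hφ : HasDerivWithinAt φ φ' s t) (ht : φ t ≠ 0) (v : E) :
    HasDerivWithinAt (fun u => ⟪φ u, v⟫ / ‖φ u‖ ^ 2)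
      ((⟪φ', v⟫ * ‖φ t‖ ^ 2 - ⟪φ t, v⟫ * (2 * ⟪φ t, φ'⟫)) / (‖φ t‖ ^ 2) ^ 2) s t := by
  have hv : HasDerivWithinAt (fun u => ⟪φ u, v⟫) ⟪φ', v⟫ s t := by
    simpa using hφ.inner ℝ (hasDerivWithinAt_const t s v)
  exact hv.div hφ.norm_sq (by positivity)

theorem exists_inner_eq_mul_norm_sq_of_hasDerivWithinAt {I : Set ℝ} (hI : I.OrdConnected)
    {φ φ' : ℝ → E} (hderiv : ∀ s ∈ I, HasDerivWithinAt φ (φ' s) I s)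
    (hne : ∀ s ∈ I, φ s ≠ 0) {v : E}
    (hode : ∀ s ∈ I, ⟪φ' s, v⟫ = 2 * ⟪φ s, v⟫ * ⟪φ s, φ' s⟫ / ‖φ s‖ ^ 2) :
    ∃ C : ℝ, ∀ s ∈ I, ⟪φ s, v⟫ = C * ‖φ s‖ ^ 2 := by
  rcases I.eq_empty_or_nonempty with rfl | ⟨s₀, hs₀⟩
  · exact ⟨0, fun s hs => hs.elim⟩
  have hzero : ∀ s ∈ I, HasDerivWithinAt (fun u => ⟪φ u, v⟫ / ‖φ u‖ ^ 2) 0 I s := by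
    intro s hs
    have hsq : ‖φ s‖ ^ 2 ≠ 0 := by have := hne s hs; positivity
    convert (hderiv s hs).inner_div_norm_sq (hne s hs) v using 1
    rw [hode s hs, div_mul_cancel₀ _ hsq]
    ring
  refine ⟨⟪φ s₀, v⟫ / ‖φ s₀‖ ^ 2, fun s hs => ?_⟩
  have hsq : ‖φ s‖ ^ 2 ≠ 0 := by have := hne s hs; positivity
  rw [← hI.convex.eq_of_hasDerivWithinAt_zero hzero hs hs₀, div_mul_cancel₀ _ hsq]

theorem norm_sub_smul_eq_of_inner_eq_mul_norm_sq {x v : E} {C : ℝ} (hC : C ≠ 0)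
    (hx : ⟪x, v⟫ = C * ‖x‖ ^ 2) : ‖x - (2 * C)⁻¹ • v‖ = ‖v‖ / (2 * |C|) := by
  refine (sq_eq_sq₀ (norm_nonneg _) (by positivity)).1 ?_
  rw [norm_sub_sq_real, real_inner_smul_right, hx, norm_smul, Real.norm_eq_abs, abs_inv,
    abs_mul, abs_two]
  field_simp
  rw [sq_abs]
  ring

theorem stmt13_general {m : ℕ} (I : Set ℝ) (hI : I.OrdConnected)
    (φ φ' : ℝ → EuclideanSpace ℝ (Fin m))
    (hderiv : ∀ s ∈ I, HasDerivWithinAt φ (φ' s) I s)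
    (hne : ∀ s ∈ I, φ s ≠ 0)
    (v : EuclideanSpace ℝ (Fin m))
    (hode : ∀ s ∈ I, ⟪φ' s, v⟫ = 2 * ⟪φ s, v⟫ * ⟪φ s, φ' s⟫ / ‖φ s‖ ^ 2) :
    ∃ C : ℝ, (∀ s ∈ I, ⟪φ s, v⟫ = C * ‖φ s‖ ^ 2) ∧
      (C = 0 → ∀ s ∈ I, φ s ∈ {x : EuclideanSpace ℝ (Fin m) | ⟪x, v⟫ = 0}) ∧
      (C ≠ 0 → ∀ s ∈ I, ‖φ s - (2 * C)⁻¹ • v‖ = ‖v‖ / (2 * |C|)) := by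
  obtain ⟨C, hC⟩ := exists_inner_eq_mul_norm_sq_of_hasDerivWithinAt hI hderiv hne hode
  refine ⟨C, hC, fun hC0 s hs => ?_, fun hC0 s hs => ?_⟩
  · simp [hC s hs, hC0]
  · exact norm_sub_smul_eq_of_inner_eq_mul_norm_sq hC0 (hC s hs)

/-- if `⟨φ'(s), v⟩ = 2⟨φ(s), v⟩⟨φ(s), φ'(s)⟩/‖φ(s)‖²` on an interval `I`, then
`⟨φ(s), v⟩ = C‖φ(s)‖²` on `I` for some constant `C`; so `φ(I)` lies in the hyperplane
`⟨x, v⟩ = 0` if `C = 0`, and in the sphere of center `v/(2C)` and radius `‖v‖/(2|C|)` if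
`C ≠ 0`. -/
theorem stmt13 {m : ℕ} (I : Set ℝ) (hI : I.OrdConnected)
    (φ φ' : ℝ → EuclideanSpace ℝ (Fin m))
    (hderiv : ∀ s ∈ I, HasDerivWithinAt φ (φ' s) I s)
    (hne : ∀ s ∈ I, φ s ≠ 0)
    (v : EuclideanSpace ℝ (Fin m)) (hv : v ≠ 0)
    (hode : ∀ s ∈ I, ⟪φ' s, v⟫ = 2 * ⟪φ s, v⟫ * ⟪φ s, φ' s⟫ / ‖φ s‖ ^ 2) :
    ∃ C : ℝ, (∀ s ∈ I, ⟪φ s, v⟫ = C * ‖φ s‖ ^ 2) ∧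
      (C = 0 → ∀ s ∈ I, φ s ∈ {x : EuclideanSpace ℝ (Fin m) | ⟪x, v⟫ = 0}) ∧
      (C ≠ 0 → ∀ s ∈ I, ‖φ s - (2 * C)⁻¹ • v‖ = ‖v‖ / (2 * |C|)) :=
  stmt13_general I hI φ φ' hderiv hne v hode
end
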